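/- For p ∈ (-∞,-1] ∪ [0,∞), the inequality (2 + (1+3p)cosh t)/(3 + p + 2p·cosh t) < sinh t / t holds for all t ∈ (0,∞) if and only if p ∈ (-∞,-1] ∪ [1/9,∞); and the reverse inequality holds for all t > 0 if and only if p = 0. -/

import Mathlib

/-!
With `D = 3 + p + 2p cosh t`, the difference `sinh t / t - (2 + (1+3p) cosh t) / D` has the sign
of `G(t) D`, where `G(t) = (3+p) sinh t + p sinh 2t - 2t - (1+3p) t cosh t`. The combinations
`a sinh t + b sinh 2t + c t + d t cosh t` and `a cosh t + b cosh 2t + c + d t sinh t` are exchanged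
by differentiation; `G, G', …, G⁽⁴⁾` vanish at `0` and
`G⁽⁵⁾(t) = (61p-1) cosh² t - (2+14p) cosh t + 1 - 29p + (1+3p)(sinh² t - t sinh t)`.
Since `0 < t sinh t ≤ sinh² t`, `G⁽⁵⁾ > 0` on `(0,∞)` when `p ≥ 1/9` and `G⁽⁵⁾ < 0` when
`p ≤ 0`, and five integrations from `0` give the sign of `G`. When `p < 1/9`,
`G⁽⁵⁾(0) = 18p - 2 < 0`, so `G` is negative near `0`; when `p > 0`, the term `p sinh 2t` makes `G`
nonnegative for large `t`.
-/

open Real Set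

noncomputable def sinhComb (a b c d t : ℝ) : ℝ :=
  a * sinh t + b * sinh (2 * t) + c * t + d * (t * cosh t)

noncomputable def coshComb (a b c d t : ℝ) : ℝ :=
  a * cosh t + b * cosh (2 * t) + c + d * (t * sinh t)

section Comb

variable {a b c d T : ℝ}

theorem hasDerivAt_sinhComb (a b c d t : ℝ) :
    HasDerivAt (sinhComb a b c d) (coshComb (a + d) (2 * b) c d t) t := by
  have h2 := (hasDerivAt_sinh (2 * t)).comp t ((hasDerivAt_id t).const_mul 2)
  have h := ((((hasDerivAt_sinh t).const_mul a).add (h2.const_mul b)).add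
    ((hasDerivAt_id t).const_mul c)).add (((hasDerivAt_id t).mul (hasDerivAt_cosh t)).const_mul d)
  exact h.congr_deriv (by simp only [coshComb, id]; ring)

theorem hasDerivAt_coshComb (a b c d t : ℝ) :
    HasDerivAt (coshComb a b c d) (sinhComb (a + d) (2 * b) 0 d t) t := by
  have h2 := (hasDerivAt_cosh (2 * t)).comp t ((hasDerivAt_id t).const_mul 2)
  have h := ((((hasDerivAt_cosh t).const_mul a).add (h2.const_mul b)).add
    (hasDerivAt_const t c)).add (((hasDerivAt_id t).mul (hasDerivAt_sinh t)).const_mul d)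
  exact h.congr_deriv (by simp only [sinhComb, id]; ring)

theorem sinhComb_zero : sinhComb a b c d 0 = 0 := by
  simp [sinhComb]

theorem coshComb_zero : coshComb a b c d 0 = a + b + c := by
  simp [coshComb]

theorem pos_of_hasDerivAt_of_pos {f f' : ℝ → ℝ} (hf : ∀ t, HasDerivAt f (f' t) t)
    (h0 : f 0 = 0) (hf' : ∀ t ∈ Ioo 0 T, 0 < f' t) : ∀ t ∈ Ioo 0 T, 0 < f t := by
  rintro t ⟨ht, htT⟩
  obtain ⟨s, hs, hslope⟩ := exists_hasDerivAt_eq_slope f f' ht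
    (fun x _ => (hf x).continuousAt.continuousWithinAt) (fun x _ => hf x)
  have := hf' s ⟨hs.1, hs.2.trans htT⟩
  rw [hslope, h0, sub_zero, sub_zero] at this
  exact (div_pos_iff_of_pos_right ht).1 this

-- `h1` and `h3` say that the first and third derivatives vanish at `0`.
theorem sinhComb_pos (h1 : a + 2 * b + c + d = 0) (h3 : a + 8 * b + 3 * d = 0)
    (h5 : ∀ t ∈ Ioo 0 T, 0 < coshComb (a + 5 * d) (32 * b) 0 d t) :
    ∀ t ∈ Ioo 0 T, 0 < sinhComb a b c d t := by
  have hd4 := pos_of_hasDerivAt_of_pos (hasDerivAt_sinhComb (a + 4 * d) (16 * b) 0 d)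
    sinhComb_zero fun t ht => by convert h5 t ht using 2 <;> ring
  have hd3 := pos_of_hasDerivAt_of_pos (hasDerivAt_coshComb (a + 3 * d) (8 * b) 0 d)
    (by rw [coshComb_zero]; linarith) fun t ht => by convert hd4 t ht using 2 <;> ring
  have hd2 := pos_of_hasDerivAt_of_pos (hasDerivAt_sinhComb (a + 2 * d) (4 * b) 0 d)
    sinhComb_zero fun t ht => by convert hd3 t ht using 2 <;> ring
  have hd1 := pos_of_hasDerivAt_of_pos (hasDerivAt_coshComb (a + d) (2 * b) c d)
    (by rw [coshComb_zero]; linarith) fun t ht => by convert hd2 t ht using 2 <;> ring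
  exact pos_of_hasDerivAt_of_pos (hasDerivAt_sinhComb a b c d) sinhComb_zero hd1

theorem sinhComb_neg (h1 : a + 2 * b + c + d = 0) (h3 : a + 8 * b + 3 * d = 0)
    (h5 : ∀ t ∈ Ioo 0 T, coshComb (a + 5 * d) (32 * b) 0 d t < 0) :
    ∀ t ∈ Ioo 0 T, sinhComb a b c d t < 0 := by
  have hneg := sinhComb_pos (a := -a) (b := -b) (c := -c) (d := -d) (by linarith) (by linarith)
    fun t ht => by have := h5 t ht; simp only [coshComb] at *; linarith
  intro t ht
  have := hneg t ht
  simp only [sinhComb] at *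
  linarith

end Comb

noncomputable def gap (p t : ℝ) : ℝ :=
  sinhComb (3 + p) p (-2) (-(1 + 3 * p)) t

noncomputable def gapFifthDeriv (p t : ℝ) : ℝ :=
  coshComb (-2 - 14 * p) (32 * p) 0 (-(1 + 3 * p)) t

section Gap

variable {p t : ℝ}

theorem mul_sinh_le_sinh_sq (ht : 0 ≤ t) : t * sinh t ≤ sinh t ^ 2 := by
  rw [sq]
  exact mul_le_mul_of_nonneg_right (self_le_sinh_iff.2 ht) (sinh_nonneg_iff.2 ht)

theorem sq_div_four_le_sinh (ht : 0 ≤ t) : t ^ 2 / 4 ≤ sinh t := by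
  have h1 := quadratic_le_exp_of_nonneg ht
  have h2 : exp (-t) ≤ 1 := exp_le_one_iff.2 (neg_nonpos.2 ht)
  rw [sinh_eq]
  linarith

theorem gapFifthDeriv_eq (p t : ℝ) :
    gapFifthDeriv p t = (61 * p - 1) * cosh t ^ 2 - (2 + 14 * p) * cosh t + 1 - 29 * p
      + (1 + 3 * p) * (sinh t ^ 2 - t * sinh t) := by
  rw [gapFifthDeriv, coshComb, cosh_two_mul, sinh_sq]
  ring

theorem gapFifthDeriv_pos (hp : 1 / 9 ≤ p) (ht : 0 < t) : 0 < gapFifthDeriv p t := by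
  have hc : 1 < cosh t := one_lt_cosh.2 ht.ne'
  have hu := mul_sinh_le_sinh_sq ht.le
  rw [gapFifthDeriv_eq]
  nlinarith [mul_nonneg (by linarith : (0:ℝ) ≤ 1 + 3 * p) (sub_nonneg.2 hu),
    mul_pos (sub_pos.2 hc) (by nlinarith : 0 < (61 * p - 1) * (cosh t + 1) - 2 - 14 * p)]

theorem gapFifthDeriv_neg (hp : p ≤ 0) (ht : 0 < t) : gapFifthDeriv p t < 0 := by
  have hc : 1 < cosh t := one_lt_cosh.2 ht.ne'
  have hu := mul_sinh_le_sinh_sq ht.le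
  have hu0 : 0 < t * sinh t := mul_pos ht (sinh_pos_iff.2 ht)
  rw [gapFifthDeriv_eq]
  rcases le_or_gt 0 (1 + 3 * p) with h | h
  · nlinarith [mul_nonneg h hu0.le, sinh_sq t,
      mul_nonneg (neg_nonneg.2 hp) (by nlinarith : (0:ℝ) ≤ 64 * cosh t ^ 2 - 14 * cosh t - 32)]
  · nlinarith [mul_nonneg (by linarith : (0:ℝ) ≤ -(1 + 3 * p)) (sub_nonneg.2 hu),
      mul_pos (sub_pos.2 hc) (by nlinarith : 0 < -((61 * p - 1) * (cosh t + 1) - 2 - 14 * p))]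

theorem gap_pos_of_gapFifthDeriv_pos {T : ℝ} (h5 : ∀ s ∈ Ioo 0 T, 0 < gapFifthDeriv p s) :
    ∀ t ∈ Ioo 0 T, 0 < gap p t :=
  sinhComb_pos (by ring) (by ring)
    fun s hs => by convert h5 s hs using 1; rw [gapFifthDeriv]; ring_nf

theorem gap_neg_of_gapFifthDeriv_neg {T : ℝ} (h5 : ∀ s ∈ Ioo 0 T, gapFifthDeriv p s < 0) :
    ∀ t ∈ Ioo 0 T, gap p t < 0 :=
  sinhComb_neg (by ring) (by ring)
    fun s hs => by convert h5 s hs using 1; rw [gapFifthDeriv]; ring_nf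

theorem gap_pos (hp : 1 / 9 ≤ p) (ht : 0 < t) : 0 < gap p t :=
  gap_pos_of_gapFifthDeriv_pos (T := t + 1) (fun s hs => gapFifthDeriv_pos hp hs.1)
    t ⟨ht, by linarith⟩

theorem gap_neg (hp : p ≤ 0) (ht : 0 < t) : gap p t < 0 :=
  gap_neg_of_gapFifthDeriv_neg (T := t + 1) (fun s hs => gapFifthDeriv_neg hp hs.1)
    t ⟨ht, by linarith⟩

theorem exists_gap_neg (hp : p < 1 / 9) : ∃ t, 0 < t ∧ gap p t < 0 := by
  have h0 : gapFifthDeriv p 0 < 0 := by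
    rw [gapFifthDeriv, coshComb_zero]
    linarith
  have hcont : Continuous (gapFifthDeriv p) := by
    unfold gapFifthDeriv coshComb
    fun_prop
  obtain ⟨l, u, ⟨hl, hu⟩, hsub⟩ :=
    mem_nhds_iff_exists_Ioo_subset.1 (hcont.continuousAt.eventually_lt continuousAt_const h0)
  have hneg := gap_neg_of_gapFifthDeriv_neg fun s hs => hsub ⟨hl.trans hs.1, hs.2⟩
  exact ⟨u / 2, by linarith, hneg (u / 2) ⟨by linarith, by linarith⟩⟩

theorem exists_gap_nonneg (hp : 0 < p) : ∃ t, 0 < t ∧ 0 ≤ gap p t := by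
  -- chosen so that `p t² / 2 = (1 + 3p) t`, while `sinh t ≥ t² / 4`
  set t := 2 * (1 + 3 * p) / p
  have ht : 0 < t := by positivity
  have hpt : p * t = 2 * (1 + 3 * p) := by simp only [t]; field_simp
  have hsplit : gap p t
      = ((3 + p) * sinh t - 2 * t) + cosh t * (2 * p * sinh t - (1 + 3 * p) * t) := by
    rw [gap, sinhComb, sinh_two_mul]
    ring
  have h1 : t ≤ sinh t := self_le_sinh_iff.2 ht.le
  have h2 : (1 + 3 * p) * t ≤ 2 * p * sinh t := by
    nlinarith [sq_div_four_le_sinh ht.le]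
  refine ⟨t, ht, ?_⟩
  rw [hsplit]
  nlinarith [mul_nonneg (cosh_pos t).le (sub_nonneg.2 h2)]

theorem sinh_div_sub_eq_gap_div (ht : t ≠ 0) (hD : 3 + p + 2 * p * cosh t ≠ 0) :
    sinh t / t - (2 + (1 + 3 * p) * cosh t) / (3 + p + 2 * p * cosh t)
      = gap p t * (3 + p + 2 * p * cosh t) / (t * (3 + p + 2 * p * cosh t) ^ 2) := by
  rw [gap, sinhComb, sinh_two_mul]
  field_simp
  ring

theorem lt_sinh_div_iff (ht : 0 < t) (hD : 3 + p + 2 * p * cosh t ≠ 0) :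
    (2 + (1 + 3 * p) * cosh t) / (3 + p + 2 * p * cosh t) < sinh t / t
      ↔ 0 < gap p t * (3 + p + 2 * p * cosh t) := by
  rw [← sub_pos, sinh_div_sub_eq_gap_div ht.ne' hD, div_pos_iff_of_pos_right (by positivity)]

theorem sinh_div_lt_iff (ht : 0 < t) (hD : 3 + p + 2 * p * cosh t ≠ 0) :
    sinh t / t < (2 + (1 + 3 * p) * cosh t) / (3 + p + 2 * p * cosh t)
      ↔ gap p t * (3 + p + 2 * p * cosh t) < 0 := by
  rw [← sub_neg, sinh_div_sub_eq_gap_div ht.ne' hD, div_lt_iff₀ (by positivity), zero_mul]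

theorem denom_pos (hp : 0 ≤ p) (t : ℝ) : 0 < 3 + p + 2 * p * cosh t := by
  have := cosh_pos t
  positivity

theorem denom_neg (hp : p ≤ -1) (ht : 0 < t) : 3 + p + 2 * p * cosh t < 0 := by
  nlinarith [one_lt_cosh.2 ht.ne']

end Gap

theorem stmt16 (p : ℝ) (hp : p ≤ -1 ∨ 0 ≤ p) :
    ((∀ t : ℝ, 0 < t →
      (2 + (1+3*p)*Real.cosh t) / (3 + p + 2*p*Real.cosh t) < Real.sinh t / t) ↔
      (p ≤ -1 ∨ 1/9 ≤ p)) ∧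
    ((∀ t : ℝ, 0 < t →
      Real.sinh t / t < (2 + (1+3*p)*Real.cosh t) / (3 + p + 2*p*Real.cosh t)) ↔
      p = 0) := by
  refine ⟨⟨fun H => ?_, ?_⟩, ⟨fun H => ?_, ?_⟩⟩
  · refine hp.imp_right fun hp0 => not_lt.1 fun hp9 => ?_
    obtain ⟨t, ht, hgap⟩ := exists_gap_neg hp9
    have hD := denom_pos hp0 t
    exact ((lt_sinh_div_iff ht hD.ne').1 (H t ht)).not_gt (mul_neg_of_neg_of_pos hgap hD)
  · rintro (hp1 | hp9) t ht
    · have hD := denom_neg hp1 ht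
      exact (lt_sinh_div_iff ht hD.ne).2 (mul_pos_of_neg_of_neg (gap_neg (by linarith) ht) hD)
    · have hD := denom_pos (p := p) (by linarith) t
      exact (lt_sinh_div_iff ht hD.ne').2 (mul_pos (gap_pos hp9 ht) hD)
  · rcases hp with hp1 | hp0
    · have hD := denom_neg hp1 one_pos
      exact absurd ((sinh_div_lt_iff one_pos hD.ne).1 (H 1 one_pos))
        (mul_pos_of_neg_of_neg (gap_neg (by linarith) one_pos) hD).not_gt
    · refine (hp0.eq_or_lt.resolve_right fun hp => ?_).symm
      obtain ⟨t, ht, hgap⟩ := exists_gap_nonneg hp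
      have hD := denom_pos hp0 t
      exact ((sinh_div_lt_iff ht hD.ne').1 (H t ht)).not_ge (mul_nonneg hgap hD.le)
  · rintro rfl t ht
    have hD := denom_pos le_rfl t
    exact (sinh_div_lt_iff ht hD.ne').2 (mul_neg_of_neg_of_pos (gap_neg le_rfl ht) hD)
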